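/- Let 1 < a < 2 and M > 1, and define s:ℤ→ℤ by s(n) = ⌊(n − log₂(8M))/a⌋. Then for all integers m ≥ 1 and j ≥ 1, the set S_{m,j} = {n ∈ ℕ : s^m(n) = j} (s^m the m-fold iterate of s) satisfies |S_{m,j}| ≤ (3a/(a−1))·a^m. -/

import Mathlib

/-!
Each step of `s` divides by `a` and rounds down, so if the `m`-fold preimage of `j` lies in a real
interval of length `ℓ`, the `(m+1)`-fold preimage lies in one of length `a (ℓ + 1)`. Starting from
`ℓ₀ = 1` this gives `(a - 1) ℓₘ = (2a - 1) aᵐ - a`, and a half-open interval of length `ℓ` contains at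
most `ℓ + 1` integers.
-/

noncomputable section

/-- The scale-connecting function `s(n) = ⌊(n − log₂(8M))/a⌋`. -/
def sZ (M a : ℝ) (n : ℤ) : ℤ := ⌊((n : ℝ) - Real.logb 2 (8 * M)) / a⌋

/-- The length of a real interval containing the `m`-fold preimage of a point under `sZ M a`. -/
def preimageSpan (a : ℝ) : ℕ → ℝ
  | 0 => 1
  | m + 1 => a * (preimageSpan a m + 1)

lemma preimageSpan_nonneg {a : ℝ} (ha : 0 ≤ a) (m : ℕ) : 0 ≤ preimageSpan a m := by
  induction m with
  | zero => exact zero_le_one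
  | succ m ih => exact mul_nonneg ha (by linarith)

lemma sub_one_mul_preimageSpan (a : ℝ) (m : ℕ) :
    (a - 1) * preimageSpan a m = (2 * a - 1) * a ^ m - a := by
  induction m with
  | zero => simp only [preimageSpan, pow_zero]; ring
  | succ m ih => simp only [preimageSpan, pow_succ]; linear_combination a * ih

lemma preimageSpan_add_one_le {a : ℝ} (ha : 1 < a) (m : ℕ) :
    preimageSpan a m + 1 ≤ 3 * a / (a - 1) * a ^ m := by
  have hpow : 0 < a ^ m := pow_pos (by linarith) m
  rw [div_mul_eq_mul_div, le_div_iff₀ (by linarith)]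
  nlinarith [sub_one_mul_preimageSpan a m]

lemma sZ_mem_Ico {M a u L : ℝ} (ha : 0 < a) {n : ℤ}
    (h : u ≤ sZ M a n ∧ (sZ M a n : ℝ) < u + L) :
    Real.logb 2 (8 * M) + a * u ≤ n ∧
      (n : ℝ) < Real.logb 2 (8 * M) + a * u + a * (L + 1) := by
  set c := Real.logb 2 (8 * M)
  have hfloor : (sZ M a n : ℝ) ≤ (n - c) / a ∧ (n - c) / a < sZ M a n + 1 :=
    ⟨Int.floor_le _, Int.lt_floor_add_one _⟩
  have hlow : a * u ≤ n - c := by rw [mul_comm, ← le_div_iff₀ ha]; linarith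
  have hup : n - c < a * (u + L + 1) := by rw [mul_comm, ← div_lt_iff₀ ha]; linarith
  constructor <;> linarith

lemma exists_Ico_of_iterate_sZ_eq (M : ℝ) {a : ℝ} (ha : 0 < a) (j : ℤ) (m : ℕ) :
    ∃ u : ℝ, ∀ n : ℤ, (sZ M a)^[m] n = j → u ≤ n ∧ (n : ℝ) < u + preimageSpan a m := by
  induction m with
  | zero => exact ⟨j, fun n hn => by simp_all [preimageSpan]⟩
  | succ m ih =>
    obtain ⟨u, hu⟩ := ih
    refine ⟨Real.logb 2 (8 * M) + a * u, fun n hn => ?_⟩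
    rw [Function.iterate_succ_apply] at hn
    exact sZ_mem_Ico ha (hu _ hn)

lemma finite_and_ncard_le_of_forall_mem_Ico {S : Set ℕ} {u L : ℝ} (hL : 0 ≤ L)
    (hS : ∀ n ∈ S, u ≤ n ∧ (n : ℝ) < u + L) :
    S.Finite ∧ (S.ncard : ℝ) ≤ L + 1 := by
  set I : Finset ℤ := Finset.Ico ⌈u⌉ ⌈u + L⌉
  have hmaps : ∀ n ∈ S, (n : ℤ) ∈ (I : Set ℤ) := fun n hn => by
    obtain ⟨hlow, hup⟩ := hS n hn
    simp only [I, Finset.coe_Ico, Set.mem_Ico, Int.ceil_le, Int.lt_ceil]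
    exact ⟨by exact_mod_cast hlow, by exact_mod_cast hup⟩
  have hinj : Set.InjOn ((↑) : ℕ → ℤ) S := Nat.cast_injective.injOn
  refine ⟨(I.finite_toSet.preimage Nat.cast_injective.injOn).subset hmaps, ?_⟩
  have hcard : S.ncard ≤ (⌈u + L⌉ - ⌈u⌉).toNat := by
    simpa only [Set.ncard_coe_finset, I, Int.card_Ico] using
      Set.ncard_le_ncard_of_injOn _ hmaps hinj I.finite_toSet
  have hlen : ((⌈u + L⌉ - ⌈u⌉).toNat : ℝ) ≤ L + 1 := by
    have hmax : ((⌈u + L⌉ - ⌈u⌉).toNat : ℝ) = max ((⌈u + L⌉ : ℝ) - ⌈u⌉) 0 := by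
      exact_mod_cast Int.toNat_eq_max _
    rw [hmax]
    exact max_le (by linarith [Int.ceil_lt_add_one (u + L), Int.le_ceil u]) (by linarith)
  exact (Nat.cast_le.mpr hcard).trans hlen

theorem iterate_preimage_count_general (M a : ℝ) (ha1 : 1 < a)
    (m : ℕ) (j : ℤ) :
    {n : ℕ | (sZ M a)^[m] (n : ℤ) = j}.Finite ∧
      (({n : ℕ | (sZ M a)^[m] (n : ℤ) = j}.ncard : ℝ) ≤ 3 * a / (a - 1) * a ^ m) := by
  have ha : 0 < a := by linarith
  obtain ⟨u, hu⟩ := exists_Ico_of_iterate_sZ_eq M ha j m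
  obtain ⟨hfin, hcard⟩ := finite_and_ncard_le_of_forall_mem_Ico
    (S := {n : ℕ | (sZ M a)^[m] (n : ℤ) = j}) (preimageSpan_nonneg ha.le m)
    fun n hn => by exact_mod_cast hu n hn
  exact ⟨hfin, hcard.trans (preimageSpan_add_one_le ha1 m)⟩

/-- the preimage counting bound `|S_{m,j}| ≤ (3a/(a−1))·a^m`
for the `m`-fold iterate of `s`. -/
theorem iterate_preimage_count (M a : ℝ) (ha1 : 1 < a) (ha2 : a < 2) (hM : 1 < M)
    (m : ℕ) (hm : 1 ≤ m) (j : ℤ) (hj : 1 ≤ j) :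
    {n : ℕ | (sZ M a)^[m] (n : ℤ) = j}.Finite ∧
      (({n : ℕ | (sZ M a)^[m] (n : ℤ) = j}.ncard : ℝ) ≤ 3 * a / (a - 1) * a ^ m) :=
  iterate_preimage_count_general M a ha1 m j
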